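/- Let G be a finite abelian group with Sylow 2-subgroup P, and H a subgroup of G. Then H is a total perfect code of G if and only if H ∩ P is a total perfect code of P. -/

import Mathlib

/-- `H` is a subgroup perfect code of `G`: `H` is a perfect code in some Cayley graph of
`G`, equivalently there is an inverse-closed left transversal of `H` in `G` containing
the identity. -/
def IsSubgroupPerfectCode {G : Type*} [Group G] (H : Subgroup G) : Prop :=
  ∃ L : Set G, L⁻¹ = L ∧ (1 : G) ∈ L ∧ Subgroup.IsComplement L (H : Set G)

/-- `H` is a subgroup total perfect code of `G`: `H` is a total perfect code in some Cayley
graph of `G`, equivalently there is an inverse-closed subset of `G \ {e}` that is a left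
transversal of `H` in `G`. -/
def IsSubgroupTotalPerfectCode {G : Type*} [Group G] (H : Subgroup G) : Prop :=
  ∃ S : Set G, S⁻¹ = S ∧ (1 : G) ∉ S ∧ Subgroup.IsComplement S (H : Set G)

/-- odd power lemma -/
theorem odd_mem {G : Type*} [Group G] (H : Subgroup G) {y : G} {m : ℕ} (hm : Odd m)
    (hy : y ^ m = 1) (h2 : y ^ 2 ∈ H) : y ∈ H := by
  obtain ⟨c, hc⟩ := hm
  have h1 : y * (y ^ 2) ^ c = 1 := by
    rw [← pow_mul, ← pow_succ', ← hc]; exact hy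
  have : y = ((y ^ 2) ^ c)⁻¹ := by
    rw [eq_inv_iff_mul_eq_one]; exact h1
  rw [this]
  exact H.inv_mem (H.pow_mem h2 c)

/-- elements of 2-power order lie in the Sylow 2-subgroup of a finite comm group -/
theorem mem_sylow_two {G : Type*} [CommGroup G] [Fintype G] (P : Sylow 2 G) {x : G} {k : ℕ}
    (h : x ^ (2 ^ k) = 1) : x ∈ P.toSubgroup := by
  have hpg : IsPGroup 2 (Subgroup.zpowers x) := by
    intro z
    refine ⟨k, ?_⟩
    obtain ⟨t, ht⟩ := z.2
    have : (z : G) ^ (2 ^ k) = 1 := by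
      rw [← ht, ← zpow_natCast, ← zpow_mul, mul_comm, zpow_mul, zpow_natCast, h, one_zpow]
    exact Subtype.ext (by simpa using this)
  obtain ⟨Q, hQ⟩ := hpg.exists_le_sylow
  haveI : Fact (Nat.Prime 2) := ⟨Nat.prime_two⟩
  haveI := Sylow.unique_of_normal Q (Q.toSubgroup.normal_of_comm)
  have : Q = P := Subsingleton.elim Q P
  exact this ▸ hQ (Subgroup.mem_zpowers x)

theorem zpow_pow_comm {G : Type*} [Group G] (g : G) (c : ℤ) (t : ℕ) :
    (g ^ c) ^ t = (g ^ (t : ℕ)) ^ c := by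
  rw [← zpow_natCast (g ^ c) t, ← zpow_mul, mul_comm, zpow_mul, zpow_natCast]

theorem tpc_iff {G : Type*} [CommGroup G] (H : Subgroup G) :
    IsSubgroupTotalPerfectCode H ↔
      ((∃ h ∈ H, h ≠ 1 ∧ h ^ 2 = 1) ∧
        ∀ g : G, g ^ 2 ∈ H → ∃ x : G, x ^ 2 = 1 ∧ x⁻¹ * g ∈ H) := by
  constructor
  · rintro ⟨S, hSinv, hS1, hScompl⟩
    have hmem : ∀ g : G, ∃! s : S, (s : G)⁻¹ * g ∈ H :=
      Subgroup.isComplement_iff_existsUnique_inv_mul_mem.mp hScompl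
    have hinvS : ∀ {s : G}, s ∈ S → s⁻¹ ∈ S := by
      intro s hs; rw [← hSinv]; simpa using hs
    have key : ∀ g : G, g ^ 2 ∈ H → ∃ s : G, s ∈ S ∧ s ^ 2 = 1 ∧ s⁻¹ * g ∈ H := by
      intro g hg
      obtain ⟨s, hs, huniq⟩ := hmem g
      have hs' : ((⟨(s : G)⁻¹, hinvS s.2⟩ : S) : G)⁻¹ * g ∈ H := by
        have hmemb : g⁻¹ * (s : G) * g ^ 2 ∈ H :=
          H.mul_mem (by simpa using H.inv_mem hs) hg
        have heq : (s : G) * g = g⁻¹ * (s : G) * g ^ 2 := by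
          rw [pow_two, mul_comm g⁻¹ (s : G), mul_assoc, inv_mul_cancel_left]
        simpa [heq] using hmemb
      have := huniq ⟨(s : G)⁻¹, hinvS s.2⟩ hs'
      have hss : (s : G)⁻¹ = (s : G) := congrArg Subtype.val this
      refine ⟨s, s.2, ?_, hs⟩
      rw [pow_two]
      nth_rewrite 1 [← hss]
      exact inv_mul_cancel _
    constructor
    · obtain ⟨s, hsS, hs2, hsH⟩ := key 1 (by simpa using H.one_mem)
      refine ⟨s, by simpa using H.inv_mem (by simpa using hsH), ?_, hs2⟩
      rintro rfl; exact hS1 hsS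
    · intro g hg
      obtain ⟨s, _, hs2, hsH⟩ := key g hg
      exact ⟨s, hs2, hsH⟩
  · rintro ⟨⟨h0, h0H, h0ne, h0sq⟩, hcond⟩
    letI : LinearOrder (G ⧸ H) := IsWellOrder.linearOrder WellOrderingRel
    have hself : ∀ C : G ⧸ H, C⁻¹ = C →
        ∃ x : G, QuotientGroup.mk x = C ∧ x ^ 2 = 1 ∧ x ≠ 1 := by
      intro C hC
      induction C using QuotientGroup.induction_on with
      | H g =>
        have hg2 : g ^ 2 ∈ H := by
          have : QuotientGroup.mk (g ^ 2) = (1 : G ⧸ H) := by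
            have : ((QuotientGroup.mk g : G ⧸ H))⁻¹ = QuotientGroup.mk g := hC
            calc QuotientGroup.mk (g ^ 2) = (QuotientGroup.mk g : G ⧸ H) ^ 2 := by
                  simp [pow_two]
              _ = (QuotientGroup.mk g : G ⧸ H) * (QuotientGroup.mk g : G ⧸ H) := by
                  rw [pow_two]
              _ = (QuotientGroup.mk g : G ⧸ H) * ((QuotientGroup.mk g : G ⧸ H))⁻¹ := by
                  rw [this]
              _ = 1 := mul_inv_cancel _
          exact (QuotientGroup.eq_one_iff _).mp this
        by_cases hgH : g ∈ H
        · refine ⟨h0, ?_, h0sq, h0ne⟩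
          rw [QuotientGroup.eq]
          exact H.mul_mem (H.inv_mem h0H) hgH
        · obtain ⟨x, hx2, hxg⟩ := hcond g hg2
          refine ⟨x, by rw [QuotientGroup.eq]; exact hxg, hx2, ?_⟩
          rintro rfl
          exact hgH (by simpa using hxg)
    classical
    let f : G ⧸ H → G := fun C =>
      if hC : C⁻¹ = C then (hself C hC).choose
      else if C < C⁻¹ then C.out else (C⁻¹).out⁻¹
    have hfmem : ∀ C, QuotientGroup.mk (f C) = C := by
      intro C
      by_cases hC : C⁻¹ = C
      · simp only [f, dif_pos hC]
        exact (hself C hC).choose_spec.1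
      · simp only [f, dif_neg hC]
        by_cases hlt : C < C⁻¹
        · rw [if_pos hlt]; exact QuotientGroup.out_eq' C
        · rw [if_neg hlt]
          have : QuotientGroup.mk ((C⁻¹).out⁻¹) = ((C⁻¹ : G ⧸ H))⁻¹ := by
            rw [← QuotientGroup.out_eq' (C⁻¹)]
            simp
          rw [this, inv_inv]
    have hfinv : ∀ C, f C⁻¹ = (f C)⁻¹ := by
      intro C
      by_cases hC : C⁻¹ = C
      · have h2 : (f C) ^ 2 = 1 := by
          simp only [f, dif_pos hC]
          exact (hself C hC).choose_spec.2.1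
        have : (f C)⁻¹ = f C := by
          rw [inv_eq_iff_mul_eq_one, ← pow_two]; exact h2
        rw [hC, this]
      · have hC' : ¬ ((C⁻¹)⁻¹ = C⁻¹) := by
          rw [inv_inv]; intro h; exact hC h.symm
        by_cases hlt : C < C⁻¹
        · have hlt' : ¬ (C⁻¹ < C) := lt_asymm hlt
          simp only [f]
          rw [dif_neg hC, dif_neg hC', if_pos hlt, inv_inv, if_neg hlt']
        · have hlt' : C⁻¹ < C := by
            rcases lt_trichotomy C C⁻¹ with h | h | h
            · exact absurd h hlt
            · exact absurd h.symm hC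
            · exact h
          simp only [f]
          rw [dif_neg hC, dif_neg hC', if_neg hlt, inv_inv, if_pos hlt', inv_inv]
    have hfne : ∀ C, f C ≠ 1 := by
      intro C hfC
      have hC1 : C = 1 := by rw [← hfmem C, hfC]; simp
      have hCi : C⁻¹ = C := by rw [hC1]; simp
      have : f C = (hself C hCi).choose := by simp only [f, dif_pos hCi]
      exact (hself C hCi).choose_spec.2.2 (this ▸ hfC)
    refine ⟨Set.range f, ?_, ?_, ?_⟩
    · ext x
      simp only [Set.mem_inv, Set.mem_range]
      constructor
      · rintro ⟨C, hC⟩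
        exact ⟨C⁻¹, by rw [hfinv C, hC, inv_inv]⟩
      · rintro ⟨C, rfl⟩
        exact ⟨C⁻¹, hfinv C⟩
    · rintro ⟨C, hC⟩
      exact hfne C hC
    · exact Subgroup.isComplement_range_left hfmem

/-- Let G be a finite abelian group with Sylow 2-subgroup P and H a subgroup of G.
Then H is a total perfect code of G iff H ∩ P is a total perfect code of P. -/
theorem abelian_total_perfect_code_iff_sylow {G : Type*} [CommGroup G] [Fintype G]
    (P : Sylow 2 G) (H : Subgroup G) :
    IsSubgroupTotalPerfectCode H ↔
      IsSubgroupTotalPerfectCode (H.subgroupOf P.toSubgroup) := by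
  rw [tpc_iff, tpc_iff]
  constructor
  · rintro ⟨⟨h, hH, hne, hsq⟩, hcond⟩
    constructor
    · have hP : h ∈ P.toSubgroup := mem_sylow_two P (k := 1) (by simpa using hsq)
      refine ⟨⟨h, hP⟩, Subgroup.mem_subgroupOf.mpr hH, ?_, ?_⟩
      · intro e; exact hne (congrArg Subtype.val e)
      · exact Subtype.ext (by simpa using hsq)
    · rintro ⟨g, hgP⟩ hg2
      have hg2' : g ^ 2 ∈ H := by
        have := Subgroup.mem_subgroupOf.mp hg2
        simpa using this
      obtain ⟨x, hx2, hxg⟩ := hcond g hg2'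
      have hxP : x ∈ P.toSubgroup := mem_sylow_two P (k := 1) (by simpa using hx2)
      refine ⟨⟨x, hxP⟩, Subtype.ext (by simpa using hx2), ?_⟩
      exact Subgroup.mem_subgroupOf.mpr (by simpa using hxg)
  · rintro ⟨⟨h, hH, hne, hsq⟩, hcond⟩
    constructor
    · refine ⟨(h : G), Subgroup.mem_subgroupOf.mp hH, ?_, by simpa using congrArg Subtype.val hsq⟩
      intro e; exact hne (Subtype.ext (by simpa using e))
    · intro g hg2
      set n := orderOf g with hn
      have hn0 : n ≠ 0 := (orderOf_pos g).ne'
      set k := n.factorization 2 with hk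
      set m := n / 2 ^ k with hm
      have hmn : 2 ^ k * m = n := Nat.ordProj_mul_ordCompl_eq_self n 2
      have hnd : ¬ (2 ∣ m) := Nat.not_dvd_ordCompl Nat.prime_two hn0
      have hm_odd : Odd m := Nat.odd_iff.mpr (Nat.two_dvd_ne_zero.mp hnd)
      have hco : Nat.Coprime (2 ^ k) m :=
        Nat.Coprime.pow_left k (Nat.coprime_ordCompl Nat.prime_two hn0)
      set a := Nat.gcdA (2 ^ k) m with ha
      set b := Nat.gcdB (2 ^ k) m with hb
      have hbez : (1 : ℤ) = (2 ^ k : ℕ) * a + (m : ℕ) * b := by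
        have := Nat.gcd_eq_gcd_ab (2 ^ k) m
        rwa [hco] at this
      set q := g ^ ((2 ^ k : ℕ) * a : ℤ) with hq
      set p := g ^ ((m : ℕ) * b : ℤ) with hp
      have hpq : p * q = g := by
        rw [hp, hq, ← zpow_add]
        conv_rhs => rw [← zpow_one g]
        congr 1
        rw [add_comm]
        exact hbez.symm
      have hqm : q ^ m = 1 := by
        rw [hq, zpow_pow_comm, zpow_mul, zpow_natCast, ← pow_mul, mul_comm m, hmn, hn,
          pow_orderOf_eq_one, one_zpow]
      have hq2 : q ^ 2 ∈ H := by
        rw [hq, zpow_pow_comm]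
        exact H.zpow_mem hg2 _
      have hqH : q ∈ H := odd_mem H hm_odd hqm hq2
      have hppow : p ^ (2 ^ k : ℕ) = 1 := by
        rw [hp, zpow_pow_comm, zpow_mul, zpow_natCast, ← pow_mul, hmn, hn,
          pow_orderOf_eq_one, one_zpow]
      have hpP : p ∈ P.toSubgroup := mem_sylow_two P hppow
      have hpgq : p = g * q⁻¹ := by rw [← hpq]; group
      have hp2 : p ^ 2 ∈ H := by
        rw [hpgq, mul_pow]
        exact H.mul_mem hg2 (H.pow_mem (H.inv_mem hqH) 2)
      obtain ⟨x, hx2, hxp⟩ := hcond ⟨p, hpP⟩ (Subgroup.mem_subgroupOf.mpr (by simpa using hp2))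
      refine ⟨(x : G), by simpa using congrArg Subtype.val hx2, ?_⟩
      have hxp' : (x : G)⁻¹ * p ∈ H := by simpa using Subgroup.mem_subgroupOf.mp hxp
      have : (x : G)⁻¹ * g = ((x : G)⁻¹ * p) * q := by rw [← hpq, mul_assoc]
      rw [this]
      exact H.mul_mem hxp' hqH
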